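/- With a_j = S(j/2), Σ_L the L×L Toeplitz matrix (a_{k-j}), and ω(L) = det(I - (1/2)Σ_L), one has G_{3/2} := 2(ω(4) + ω(2) - 2ω(3)) = 1/8 + 4/(9π²) + 32/(9π⁴). -/

import Mathlib

/-!
Each `ω L` is the determinant of a symmetric Toeplitz matrix whose first row is
`1/2, -1/π, 0, 1/(3π)`, read off from the half-integer values of the sinc kernel.
Symmetric Toeplitz matrices are centrosymmetric, so their determinants split into two
half-size factors, e.g. for first row `(a, b, c, d)`
`det = ((a + d)(a + b) - (b + c)²) · ((a - d)(a - b) - (b - c)²)`.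
With these closed forms the identity is a rational identity in `π`.
-/

noncomputable def S (x : ℝ) : ℝ :=
  if x = 0 then 1 else Real.sin (Real.pi * x) / (Real.pi * x)

/-- The `L × L` symmetric Toeplitz matrix with entries `a_{k-j} = S((k-j)/2)`. -/
noncomputable def SigmaL (L : ℕ) : Matrix (Fin L) (Fin L) ℝ :=
  Matrix.of fun j k => S ((((k : ℤ) - (j : ℤ) : ℤ) : ℝ) / 2)

noncomputable def ω (L : ℕ) : ℝ := ((1 : Matrix (Fin L) (Fin L) ℝ) - (1/2 : ℝ) • SigmaL L).det

open Real

lemma S_neg (x : ℝ) : S (-x) = S x := by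
  unfold S
  split_ifs with h₁ h₂ h₂
  · rfl
  · exact absurd (neg_eq_zero.mp h₁) h₂
  · exact absurd (neg_eq_zero.mpr h₂) h₁
  · rw [mul_neg, Real.sin_neg, neg_div_neg_eq]

lemma S_intCast {n : ℤ} (hn : n ≠ 0) : S n = 0 := by
  rw [S, if_neg (Int.cast_ne_zero.mpr hn), mul_comm, Real.sin_int_mul_pi, zero_div]

lemma S_two_mul_add_one_div_two (n : ℕ) : S ((2 * n + 1) / 2) = 2 * (-1) ^ n / ((2 * n + 1) * π) := by
  have hx : ((2 * n + 1) / 2 : ℝ) ≠ 0 := by positivity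
  have hsin : Real.sin (π * ((2 * n + 1) / 2)) = (-1) ^ n := by
    rw [show π * ((2 * n + 1) / 2) = π / 2 + n * π by ring, Real.sin_add_nat_mul_pi,
      Real.sin_pi_div_two, mul_one]
  rw [S, if_neg hx, hsin]
  field_simp

lemma S_zero : S 0 = 1 := if_pos rfl

lemma S_one : S 1 = 0 := by
  simpa using S_intCast one_ne_zero

lemma S_half : S (1 / 2) = 2 / π := by
  simpa using S_two_mul_add_one_div_two 0

lemma S_three_halves : S (3 / 2) = -(2 / (3 * π)) := by
  have h := S_two_mul_add_one_div_two 1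
  norm_num at h
  rw [h, neg_div]

section SymmToeplitz

variable {R : Type*}

def symmToeplitz (L : ℕ) (a : ℕ → R) : Matrix (Fin L) (Fin L) R :=
  Matrix.of fun j k => a ((k : ℤ) - j).natAbs

variable [CommRing R]

lemma one_sub_smul_symmToeplitz (L : ℕ) (c : R) (a : ℕ → R) :
    1 - c • symmToeplitz L a = symmToeplitz L (Pi.single 0 1 - c • a) := by
  ext j k
  simp only [symmToeplitz, Matrix.sub_apply, Matrix.smul_apply, Matrix.of_apply,
    Matrix.one_apply, Pi.sub_apply, Pi.smul_apply, Pi.single_apply, Int.natAbs_eq_zero,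
    sub_eq_zero, Int.natCast_inj, Fin.val_inj, eq_comm (a := k)]

lemma det_symmToeplitz_two (a : ℕ → R) :
    (symmToeplitz 2 a).det = (a 0 + a 1) * (a 0 - a 1) := by
  rw [Matrix.det_fin_two]
  simp [symmToeplitz]
  ring

lemma det_symmToeplitz_three (a : ℕ → R) :
    (symmToeplitz 3 a).det = (a 0 - a 2) * (a 0 ^ 2 + a 0 * a 2 - 2 * a 1 ^ 2) := by
  rw [Matrix.det_fin_three]
  simp [symmToeplitz]
  ring

lemma det_symmToeplitz_four (a : ℕ → R) :
    (symmToeplitz 4 a).det =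
      ((a 0 + a 3) * (a 0 + a 1) - (a 1 + a 2) ^ 2) *
        ((a 0 - a 3) * (a 0 - a 1) - (a 1 - a 2) ^ 2) := by
  simp [Matrix.det_succ_row_zero, Fin.sum_univ_succ, symmToeplitz, Fin.succAbove]
  ring

end SymmToeplitz

lemma SigmaL_eq_symmToeplitz (L : ℕ) : SigmaL L = symmToeplitz L fun n : ℕ => S (n / 2) := by
  ext j k
  simp only [SigmaL, symmToeplitz, Matrix.of_apply, Nat.cast_natAbs, Int.cast_abs]
  rcases abs_choice (((k : ℤ) - j : ℤ) : ℝ) with h | h <;> rw [h]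
  rw [neg_div, S_neg]

lemma ω_eq_det_symmToeplitz (L : ℕ) :
    ω L = (symmToeplitz L (Pi.single 0 1 - (1 / 2 : ℝ) • fun n : ℕ => S (n / 2))).det := by
  rw [ω, SigmaL_eq_symmToeplitz, one_sub_smul_symmToeplitz]

theorem gap_probability_three_halves :
    2 * (ω 4 + ω 2 - 2 * ω 3) = 1/8 + 4 / (9 * Real.pi ^ 2) + 32 / (9 * Real.pi ^ 4) := by
  simp only [ω_eq_det_symmToeplitz, det_symmToeplitz_two, det_symmToeplitz_three,
    det_symmToeplitz_four, Pi.sub_apply, Pi.smul_apply, smul_eq_mul]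
  norm_num [S_zero, S_half, S_one, S_three_halves]
  field_simp
  ring
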